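/- Let D be an integral domain with quotient field K, let T be an overring of D, let ⋆_{{T}} be the semistar operation of D defined by E^{⋆_{{T}}} := E·T, and let ★_{{T[X]}} be the semistar operation of D[X] defined by A^{★_{{T[X]}}} := A·T[X]. Then ⋏^{⋆_{{T}}} = ★_{{T[X]}} ⪇ ▲^{⋆_{{T}}}. -/

import Mathlib

/- Preliminaries: semistar operations on an integral domain `R` with quotient field `F`
(submodules of `F` over `R`), polynomial extension of semistar operations from `D`
to `D[X]` (viewed inside the quotient field `K(X) = RatFunc K` of `D[X]`). -/

open Polynomial Pointwise

set_option synthInstance.maxHeartbeats 1000000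
set_option maxHeartbeats 1000000

open scoped Classical

noncomputable section

section Generic

variable (R F : Type*) [CommRing R] [Field F] [Algebra R F]

/-- `o` is a semistar operation of `R` (on the nonzero `R`-submodules of the
quotient field `F`). -/
def IsSemistarOp (o : Submodule R F → Submodule R F) : Prop :=
  (∀ x : F, x ≠ 0 → ∀ E : Submodule R F, E ≠ ⊥ → o (x • E) = x • o E) ∧
  (∀ E G : Submodule R F, E ≠ ⊥ → G ≠ ⊥ → E ≤ G → o E ≤ o G) ∧
  (∀ E : Submodule R F, E ≠ ⊥ → E ≤ o E) ∧
  (∀ E : Submodule R F, E ≠ ⊥ → o (o E) = o E)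

/-- The finite-type operation `⋆_f` associated to `⋆`:
`E^{⋆_f} = ⋃ { G^⋆ : G nonzero finitely generated, G ⊆ E }`. -/
def finTypeFun (o : Submodule R F → Submodule R F) : Submodule R F → Submodule R F :=
  fun E => ⨆ (G : Submodule R F) (_ : G ≠ ⊥) (_ : G.FG) (_ : G ≤ E), o G

/-- `⋆` is of finite type, i.e. `⋆ = ⋆_f`. -/
def IsFiniteTypeFun (o : Submodule R F → Submodule R F) : Prop :=
  ∀ E : Submodule R F, E ≠ ⊥ → o E = finTypeFun R F o E

/-- `⋆` is stable: `(E ∩ G)^⋆ = E^⋆ ∩ G^⋆`. -/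
def IsStableFun (o : Submodule R F → Submodule R F) : Prop :=
  ∀ E G : Submodule R F, E ≠ ⊥ → G ≠ ⊥ → o (E ⊓ G) = o E ⊓ o G

/-- An ideal of `R` viewed as an `R`-submodule of `F`. -/
def idealSub (J : Ideal R) : Submodule R F := Submodule.map (Algebra.linearMap R F) J

/-- `(E : J) = { x ∈ F : xJ ⊆ E }` for an ideal `J` of `R`. -/
def colonIdeal (E : Submodule R F) (J : Ideal R) : Submodule R F where
  carrier := { x : F | ∀ a ∈ J, a • x ∈ E }
  add_mem' := fun {x y} hx hy a ha => by
    simpa [smul_add] using E.add_mem (hx a ha) (hy a ha)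
  zero_mem' := fun a _ => by simpa using E.zero_mem
  smul_mem' := fun r x hx a ha => by
    rw [← mul_smul, mul_comm, mul_smul]
    exact E.smul_mem r (hx a ha)

/-- The stable finite-type operation `tilde ⋆` associated to `⋆`:
`E^{tilde ⋆} = ⋃ { (E : J) : J nonzero finitely generated integral ideal with J^⋆ = R^⋆ }`. -/
def tildeFun (o : Submodule R F → Submodule R F) : Submodule R F → Submodule R F :=
  fun E => ⨆ (J : Ideal R) (_ : J ≠ ⊥) (_ : J.FG)
    (_ : o (idealSub R F J) = o (1 : Submodule R F)), colonIdeal R F E J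

/-- The `v`-operation: `E^v = (R : (R : E))` for `E` a nonzero fractional ideal,
and `E^v = F` otherwise. -/
def vFun : Submodule R F → Submodule R F := fun E =>
  if ∃ d : R, d ≠ 0 ∧ ∀ x ∈ E, d • x ∈ (1 : Submodule R F) then
    (1 : Submodule R F) / ((1 : Submodule R F) / E)
  else ⊤

/-- The `eab` operation `⋆_a` associated to `⋆`. -/
def aFun (o : Submodule R F → Submodule R F) : Submodule R F → Submodule R F := fun E =>
  ⨆ (G : Submodule R F) (_ : G ≠ ⊥) (_ : G.FG) (_ : G ≤ E),
    ⨆ (H : Submodule R F) (_ : H ≠ ⊥) (_ : H.FG), o (G * H) / o H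

/-- `I` is a quasi-`⋆`-ideal: a nonzero integral ideal with `I^⋆ ∩ R = I`. -/
def isQuasiIdealFun (o : Submodule R F → Submodule R F) (I : Ideal R) : Prop :=
  I ≠ ⊥ ∧ (o (idealSub R F I)).comap (Algebra.linearMap R F) = I

/-- `I` is a quasi-`⋆`-maximal ideal: maximal among proper quasi-`⋆`-ideals. -/
def isQuasiMaximalFun (o : Submodule R F → Submodule R F) (I : Ideal R) : Prop :=
  isQuasiIdealFun R F o I ∧ I ≠ ⊤ ∧
    ∀ J : Ideal R, isQuasiIdealFun R F o J → J ≠ ⊤ → I ≤ J → I = J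

/-- The `v`-operation relative to an overring `R'` (an `R`-submodule of `F`):
`B ↦ (R' : (R' : B))` for `B` a nonzero fractional ideal of `R'`, `F` otherwise. -/
def vRelFun (R' B : Submodule R F) : Submodule R F :=
  if ∃ z ∈ R', z ≠ 0 ∧ ∀ x ∈ B, z * x ∈ R' then R' / (R' / B) else ⊤

/-- The `t`-operation relative to an overring `R'`: finite-type operation associated to
the `v`-operation of `R'` (the union being over nonzero finitely generated
`R'`-submodules contained in `B`). -/
def tRelFun (R' B : Submodule R F) : Submodule R F :=
  ⨆ (G : Submodule R F) (_ : G ≠ ⊥)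
    (_ : ∃ S : Finset F, G = R' * Submodule.span R (S : Set F)) (_ : G ≤ B),
    vRelFun R F R' G

end Generic

section Poly

variable (D K : Type*) [CommRing D] [IsDomain D] [Field K] [Algebra D K] [IsFractionRing D K]

/-- The canonical ring homomorphism `D[X] → K(X)`. -/
def polyToRF : Polynomial D →+* RatFunc K :=
  (algebraMap (Polynomial K) (RatFunc K)).comp (Polynomial.mapRingHom (algebraMap D K))

/-- `K(X)` is an algebra over `D[X]`; in fact it is the quotient field of `D[X]`. -/
instance (priority := 100) : Algebra (Polynomial D) (RatFunc K) := (polyToRF D K).toAlgebra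

/-- For a `D`-submodule `E` of `K`, the `D[X]`-submodule `E[X]` of `K(X)`:
polynomials all of whose coefficients lie in `E`. -/
def polyExt (E : Submodule D K) : Submodule (Polynomial D) (RatFunc K) where
  carrier := { f : RatFunc K | ∃ p : Polynomial K, (∀ n, p.coeff n ∈ E) ∧
      f = algebraMap (Polynomial K) (RatFunc K) p }
  add_mem' := by
    rintro f g ⟨p, hp, rfl⟩ ⟨q, hq, rfl⟩
    exact ⟨p + q, fun n => by simpa using E.add_mem (hp n) (hq n), by simp⟩
  zero_mem' := ⟨0, fun n => by simpa using E.zero_mem, by simp⟩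
  smul_mem' := by
    rintro c f ⟨p, hp, rfl⟩
    refine ⟨Polynomial.map (algebraMap D K) c * p, fun n => ?_, ?_⟩
    · rw [Polynomial.coeff_mul]
      refine Submodule.sum_mem E fun ij _ => ?_
      rw [Polynomial.coeff_map, ← Algebra.smul_def]
      exact E.smul_mem _ (hp ij.2)
    · rw [Algebra.smul_def, RingHom.algebraMap_toAlgebra, map_mul]
      unfold polyToRF
      simp

/-- The contraction `B ∩ K` of a `D[X]`-submodule `B` of `K(X)` to a `D`-submodule of `K`. -/
def contractToBase (B : Submodule (Polynomial D) (RatFunc K)) : Submodule D K where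
  carrier := { x : K | algebraMap K (RatFunc K) x ∈ B }
  add_mem' := fun {x y} hx hy => by
    simpa [Set.mem_setOf_eq, map_add] using B.add_mem hx hy
  zero_mem' := by simpa using B.zero_mem
  smul_mem' := fun d x hx => by
    have h : algebraMap K (RatFunc K) (d • x)
        = (Polynomial.C d : Polynomial D) • (algebraMap K (RatFunc K) x) := by
      rw [Algebra.smul_def d x, map_mul, Algebra.smul_def, RingHom.algebraMap_toAlgebra]
      unfold polyToRF
      simp only [RingHom.coe_comp, Function.comp_apply, Polynomial.coe_mapRingHom,
        Polynomial.map_C, RatFunc.algebraMap_C, RatFunc.algebraMap_eq_C]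
    show algebraMap K (RatFunc K) (d • x) ∈ B
    rw [h]
    exact B.smul_mem (Polynomial.C d) hx

/-- The content `c_D(S)`: the `D`-submodule of `K` generated by the coefficients of all
polynomials belonging to `S`. -/
def contentOf (S : Set (RatFunc K)) : Submodule D K :=
  Submodule.span D { x : K | ∃ p : Polynomial K,
    algebraMap (Polynomial K) (RatFunc K) p ∈ S ∧ ∃ n, p.coeff n = x }

/-- The semistar operation `▲^⋆_T` of `D[X]` associated to a semistar operation `⋆` of `D`
and an overring `T` of `D`:
`A ↦ ⋂ { z⁻¹ (c_D(zA))^⋆[X] : z ∈ (T[X] : A), z ≠ 0 }` if `(T[X] : A) ≠ 0`, else `A ↦ K(X)`. -/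
def bigTriT (o : Submodule D K → Submodule D K) (T : Subalgebra D K) :
    Submodule (Polynomial D) (RatFunc K) → Submodule (Polynomial D) (RatFunc K) := fun A =>
  if ∃ z : RatFunc K, z ≠ 0 ∧ ∀ a ∈ A, z * a ∈ polyExt D K (Subalgebra.toSubmodule T) then
    ⨅ (z : RatFunc K) (_ : z ≠ 0) (_ : ∀ a ∈ A, z * a ∈ polyExt D K (Subalgebra.toSubmodule T)),
      z⁻¹ • polyExt D K (o (contentOf D K (z • (A : Set (RatFunc K)))))
  else ⊤

/-- `▲^⋆ := ▲^⋆_K`, the largest strict extension of `⋆` to `D[X]`. -/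
def bigTri (o : Submodule D K → Submodule D K) :
    Submodule (Polynomial D) (RatFunc K) → Submodule (Polynomial D) (RatFunc K) :=
  bigTriT D K o ⊤

/-- `b` is an extension of `⋆` to `D[X]` : `E^⋆ = (E[X])^b ∩ K`. -/
def IsExtensionFun (o : Submodule D K → Submodule D K)
    (b : Submodule (Polynomial D) (RatFunc K) → Submodule (Polynomial D) (RatFunc K)) : Prop :=
  ∀ E : Submodule D K, E ≠ ⊥ → o E = contractToBase D K (b (polyExt D K E))

/-- `b` is a strict extension of `⋆` to `D[X]` : `(E[X])^b = E^⋆[X]`. -/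
def IsStrictExtensionFun (o : Submodule D K → Submodule D K)
    (b : Submodule (Polynomial D) (RatFunc K) → Submodule (Polynomial D) (RatFunc K)) : Prop :=
  ∀ E : Submodule D K, E ≠ ⊥ → b (polyExt D K E) = polyExt D K (o E)

/-- `⋏^⋆ : A ↦ ⋂ { A^★ : ★ a semistar operation of D[X] extending ⋆ }`. -/
def curlyFun (o : Submodule D K → Submodule D K) :
    Submodule (Polynomial D) (RatFunc K) → Submodule (Polynomial D) (RatFunc K) := fun A =>
  ⨅ (b : Submodule (Polynomial D) (RatFunc K) → Submodule (Polynomial D) (RatFunc K))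
    (_ : IsSemistarOp (Polynomial D) (RatFunc K) b) (_ : IsExtensionFun D K o b), b A

/-- The localization `D_Q` of `D` at a prime ideal `Q`, as a `D`-submodule of `K`. -/
def locSub (Q : Ideal D) : Submodule D K :=
  Submodule.span D { x : K | ∃ s : D, s ∉ Q ∧ s • x ∈ (1 : Submodule D K) }

/-- The content of an ideal `I` of `D[X]`: the `D`-submodule of `K` generated by the
coefficients of the polynomials in `I`. -/
def contentOfIdeal (I : Ideal (Polynomial D)) : Submodule D K :=
  Submodule.span D { x : K | ∃ p ∈ I, ∃ n, algebraMap D K (Polynomial.coeff p n) = x }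

/-- The Nagata ring `D_Q(X)`, as a subset of `K(X)`: fractions `f/g` with
`f, g ∈ D_Q[X]` and the coefficients of `g` generating the unit ideal of `D_Q`. -/
def nagataSet (Q : Ideal D) : Set (RatFunc K) :=
  { u : RatFunc K | ∃ g : Polynomial K, (∀ n, g.coeff n ∈ locSub D K Q) ∧
      locSub D K Q * Submodule.span D { x : K | ∃ n, g.coeff n = x } = locSub D K Q ∧
      u * algebraMap (Polynomial K) (RatFunc K) g ∈ polyExt D K (locSub D K Q) }

end Poly

/-!
`A ↦ A·T[X]` is a semistar operation of `D[X]` extending `⋆_{T}`. Conversely, contracting a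
semistar extension `★` of `⋆_{T}` at `E = D` gives `(D[X])^★ ∩ K = T`, so `T[X] ⊆ (D[X])^★`,
and then `a·T[X] ⊆ (a·D[X])^★ ⊆ A^★` for every `a ∈ A`; hence `⋏^{⋆_{T}} = ★_{T[X]}`.

If `za = p` is a polynomial, then for `q ∈ T[X]` the coefficients of `p q` lie in `c_D(zA)·T`,
so `a q ∈ z⁻¹ (c_D(zA)·T)[X]`: this is `★_{T[X]} ≤ ▲^{⋆_{T}}`. For strictness take for `A`
the `D[X]`-module generated by the powers of `X⁻¹`. No nonzero `z` makes `zA` polynomial, so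
`A^{▲} = K(X)`, whereas `A·T[X]` consists of Laurent polynomials and misses `(1 + X)⁻¹`, as
`1 + X` divides no power of `X`.
-/

lemma Submodule.one_ne_bot {R A : Type*} [CommSemiring R] [Semiring A] [Nontrivial A]
    [Algebra R A] : (1 : Submodule R A) ≠ ⊥ := fun h =>
  one_ne_zero ((Submodule.mem_bot R).mp (h ▸ Submodule.one_le.mp le_rfl))

namespace IsSemistarOp

variable {R F : Type*} [CommRing R] [Field F] [Algebra R F]

lemma of_mul_right {B : Submodule R F} (h1 : (1 : F) ∈ B) (hB : B * B ≤ B) :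
    IsSemistarOp R F (· * B) := by
  have le_mul : ∀ A : Submodule R F, A ≤ A * B := fun A a ha => by
    simpa using Submodule.mul_mem_mul ha h1
  refine ⟨fun x _ A _ => smul_mul_assoc x A B, fun _ _ _ _ h => mul_le_mul_left h B,
    fun A _ => le_mul A, fun A _ => ?_⟩
  exact le_antisymm ((mul_assoc A B B).trans_le (mul_le_mul_right hB A)) (le_mul _)

lemma mul_le_of_le_one {o : Submodule R F → Submodule R F} (ho : IsSemistarOp R F o)
    {A B : Submodule R F} (hA : A ≠ ⊥) (hB : B ≤ o 1) : A * B ≤ o A := by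
  refine Submodule.mul_le.mpr fun a ha b hb => ?_
  rcases eq_or_ne a 0 with rfl | ha0
  · simp
  have h_le : a • (1 : Submodule R F) ≤ A := by
    rwa [Submodule.smul_one_eq_span, Submodule.span_singleton_le_iff_mem]
  have h_ne : a • (1 : Submodule R F) ≠ ⊥ := by
    simpa [Submodule.smul_one_eq_span] using ha0
  have hab : a * b ∈ o (a • 1) := by
    rw [ho.1 a ha0 1 Submodule.one_ne_bot]
    exact Submodule.smul_mem_pointwise_smul b a _ (hB hb)
  exact ho.2.1 _ _ h_ne hA h_le hab

end IsSemistarOp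

section PolyExt

variable {D K : Type*} [CommRing D] [Field K] [Algebra D K]

lemma algebraMap_polynomial_apply (q : D[X]) : algebraMap D[X] (RatFunc K) q
    = algebraMap K[X] (RatFunc K) (q.map (algebraMap D K)) := rfl

lemma algebraMap_mem_polyExt {E : Submodule D K} {x : K} (hx : x ∈ E) :
    algebraMap K (RatFunc K) x ∈ polyExt D K E :=
  ⟨C x, fun n => by rcases eq_or_ne n 0 with rfl | h <;> simp [coeff_C, *],
    (RatFunc.algebraMap_C x).symm⟩

lemma polyExt_mono {E G : Submodule D K} (h : E ≤ G) : polyExt D K E ≤ polyExt D K G := by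
  rintro f ⟨p, hp, rfl⟩
  exact ⟨p, fun n => h (hp n), rfl⟩

lemma polyExt_mul_le (E G : Submodule D K) :
    polyExt D K E * polyExt D K G ≤ polyExt D K (E * G) := by
  refine Submodule.mul_le.mpr ?_
  rintro f ⟨p, hp, rfl⟩ g ⟨q, hq, rfl⟩
  refine ⟨p * q, fun n => ?_, (map_mul _ _ _).symm⟩
  rw [coeff_mul]
  exact Submodule.sum_mem _ fun ij _ => Submodule.mul_mem_mul (hp ij.1) (hq ij.2)

@[simp]
lemma contractToBase_polyExt (E : Submodule D K) : contractToBase D K (polyExt D K E) = E := by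
  ext x
  refine ⟨fun ⟨p, hp, hpx⟩ => ?_, algebraMap_mem_polyExt⟩
  have hpC : C x = p := RatFunc.algebraMap_injective K ((RatFunc.algebraMap_C x).trans hpx)
  simpa [← hpC] using hp 0

@[simp]
lemma polyExt_one : polyExt D K (1 : Submodule D K) = 1 := by
  ext f
  rw [Submodule.mem_one]
  constructor
  · rintro ⟨p, hp, rfl⟩
    have hlifts : p ∈ lifts (algebraMap D K) :=
      (lifts_iff_coeff_lifts p).mpr fun n => Submodule.mem_one.mp (hp n)
    obtain ⟨q, rfl⟩ := (mem_lifts p).mp hlifts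
    exact ⟨q, rfl⟩
  · rintro ⟨q, rfl⟩
    refine ⟨q.map (algebraMap D K), fun n => ?_, rfl⟩
    rw [coeff_map]
    exact Submodule.algebraMap_mem _

lemma polyExt_le_of_algebraMap_mem {E : Submodule D K} {M : Submodule D[X] (RatFunc K)}
    (hM : ∀ x ∈ E, algebraMap K (RatFunc K) x ∈ M) : polyExt D K E ≤ M := by
  rintro _ ⟨p, hp, rfl⟩
  have hrep : algebraMap K[X] (RatFunc K) p
      = ∑ n ∈ Finset.range (p.natDegree + 1),
        (X ^ n : D[X]) • algebraMap K (RatFunc K) (p.coeff n) := by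
    conv_lhs => rw [p.as_sum_range' (p.natDegree + 1) (lt_add_one _)]
    simp [Algebra.smul_def, algebraMap_polynomial_apply, ← RatFunc.algebraMap_C, mul_comm]
  rw [hrep]
  exact Submodule.sum_mem _ fun n _ => Submodule.smul_mem _ _ (hM _ (hp n))

lemma polyExt_mul_self_le {S : Submodule D K} (hS : S * S ≤ S) :
    polyExt D K S * polyExt D K S ≤ polyExt D K S :=
  (polyExt_mul_le S S).trans (polyExt_mono hS)

@[simp]
lemma mem_contractToBase {B : Submodule D[X] (RatFunc K)} {x : K} :
    x ∈ contractToBase D K B ↔ algebraMap K (RatFunc K) x ∈ B := Iff.rfl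

lemma isExtensionFun_mul_polyExt (S : Submodule D K) :
    IsExtensionFun D K (· * S) (· * polyExt D K S) := by
  intro E _
  dsimp only
  apply le_antisymm
  · refine Submodule.mul_le.mpr fun e he s hs => ?_
    rw [mem_contractToBase, map_mul]
    exact Submodule.mul_mem_mul (algebraMap_mem_polyExt he) (algebraMap_mem_polyExt hs)
  · intro x hx
    rw [← contractToBase_polyExt (E * S)]
    exact polyExt_mul_le E S hx

lemma polyExt_le_of_isExtensionFun {S : Submodule D K}
    {b : Submodule D[X] (RatFunc K) → Submodule D[X] (RatFunc K)}
    (hb : IsExtensionFun D K (· * S) b) : polyExt D K S ≤ b 1 := by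
  have hS : S = contractToBase D K (b 1) := by
    simpa using hb 1 Submodule.one_ne_bot
  exact polyExt_le_of_algebraMap_mem fun x hx => (hS ▸ hx : x ∈ contractToBase D K (b 1))

lemma curlyFun_mul_eq_mul_polyExt (T : Subalgebra D K) {A : Submodule D[X] (RatFunc K)}
    (hA : A ≠ ⊥) :
    curlyFun D K (· * Subalgebra.toSubmodule T) A = A * polyExt D K (Subalgebra.toSubmodule T) := by
  have hTT : Subalgebra.toSubmodule T * Subalgebra.toSubmodule T ≤ Subalgebra.toSubmodule T :=
    Submodule.mul_le.mpr fun _ hs _ ht => T.mul_mem hs ht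
  have h1 : (1 : RatFunc K) ∈ polyExt D K (Subalgebra.toSubmodule T) := by
    simpa using algebraMap_mem_polyExt (E := Subalgebra.toSubmodule T) T.one_mem
  have hsemistar := IsSemistarOp.of_mul_right h1 (polyExt_mul_self_le hTT)
  exact le_antisymm (iInf₂_le_of_le _ hsemistar (iInf_le _ (isExtensionFun_mul_polyExt _)))
    (le_iInf₂ fun b hb => le_iInf fun hext => hb.mul_le_of_le_one hA
      (polyExt_le_of_isExtensionFun hext))

lemma algebraMap_mem_polyExt_contentOf {s : Set (RatFunc K)} {p : K[X]}
    (hp : algebraMap K[X] (RatFunc K) p ∈ s) :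
    algebraMap K[X] (RatFunc K) p ∈ polyExt D K (contentOf D K s) :=
  ⟨p, fun n => Submodule.subset_span ⟨p, hp, n, rfl⟩, rfl⟩

lemma mul_polyExt_le_bigTriT (S : Submodule D K) (T : Subalgebra D K)
    (A : Submodule D[X] (RatFunc K)) : A * polyExt D K S ≤ bigTriT D K (· * S) T A := by
  unfold bigTriT
  split_ifs
  · refine le_iInf₂ fun z hz => le_iInf fun hzA => Submodule.mul_le.mpr fun a ha f hf => ?_
    obtain ⟨p, -, hp⟩ := hzA a ha
    have hza : algebraMap K[X] (RatFunc K) p ∈ z • (A : Set (RatFunc K)) :=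
      hp ▸ Set.smul_mem_smul_set ha
    have hzaf : z * a * f ∈ polyExt D K (contentOf D K (z • (A : Set (RatFunc K))) * S) :=
      polyExt_mul_le _ _ (Submodule.mul_mem_mul (hp ▸ algebraMap_mem_polyExt_contentOf hza) hf)
    convert Submodule.smul_mem_pointwise_smul _ z⁻¹ _ hzaf using 1
    rw [smul_eq_mul, mul_assoc, inv_mul_cancel_left₀ hz]
  · exact le_top

variable (D K) in
def laurentPolynomials : Submodule D[X] (RatFunc K) where
  carrier := {f | ∃ n : ℕ, ∃ p : K[X], RatFunc.X ^ n * f = algebraMap K[X] (RatFunc K) p}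
  add_mem' := by
    rintro f g ⟨m, p, hp⟩ ⟨n, q, hq⟩
    refine ⟨m + n, X ^ n * p + X ^ m * q, ?_⟩
    simp only [map_add, map_mul, map_pow, RatFunc.algebraMap_X, ← hp, ← hq]
    ring
  zero_mem' := ⟨0, 0, by simp⟩
  smul_mem' := by
    rintro c f ⟨n, p, hp⟩
    refine ⟨n, c.map (algebraMap D K) * p, ?_⟩
    rw [map_mul, ← hp, ← algebraMap_polynomial_apply, Algebra.smul_def]
    ring

lemma inv_X_pow_mem_laurentPolynomials (n : ℕ) : RatFunc.X⁻¹ ^ n ∈ laurentPolynomials D K :=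
  ⟨n, 1, by rw [← mul_pow, mul_inv_cancel₀ RatFunc.X_ne_zero, one_pow, map_one]⟩

lemma laurentPolynomials_mul_polyExt_le (E : Submodule D K) :
    laurentPolynomials D K * polyExt D K E ≤ laurentPolynomials D K :=
  Submodule.mul_le.mpr fun _ ⟨n, p, hp⟩ _ ⟨q, _, hq⟩ =>
    ⟨n, p * q, by rw [hq, map_mul, ← hp, mul_assoc]⟩

lemma inv_one_add_X_notMem_laurentPolynomials :
    (1 + RatFunc.X)⁻¹ ∉ laurentPolynomials D K := by
  rintro ⟨n, p, hp⟩
  have h1X : (1 + RatFunc.X : RatFunc K) ≠ 0 := by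
    rw [← RatFunc.algebraMap_X, ← map_one (algebraMap K[X] _), ← map_add]
    exact RatFunc.algebraMap_ne_zero fun h => by simpa using congrArg (eval 0) h
  have hX : (X : K[X]) ^ n = p * (1 + X) := RatFunc.algebraMap_injective K <| by
    rw [map_mul, map_add, map_one, map_pow, RatFunc.algebraMap_X, ← hp, mul_assoc,
      inv_mul_cancel₀ h1X, mul_one]
  simpa using congrArg (eval (-1)) hX

lemma eq_zero_of_forall_mul_inv_X_pow_eq_polynomial {z : RatFunc K}
    (h : ∀ n : ℕ, ∃ p : K[X], z * RatFunc.X⁻¹ ^ n = algebraMap K[X] (RatFunc K) p) : z = 0 := by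
  obtain ⟨p, hp⟩ := h 0
  obtain ⟨q, hq⟩ := h (p.natDegree + 1)
  have hpq : q * X ^ (p.natDegree + 1) = p := RatFunc.algebraMap_injective K <| by
    rw [map_mul, map_pow, RatFunc.algebraMap_X, ← hq, ← hp, pow_zero, mul_one, mul_assoc,
      ← mul_pow, inv_mul_cancel₀ RatFunc.X_ne_zero, one_pow, mul_one]
  obtain rfl : p = 0 := by
    by_contra hp0
    simpa using natDegree_le_of_dvd (Dvd.intro_left _ hpq) hp0
  simpa using hp

lemma bigTri_span_inv_X_pow (o : Submodule D K → Submodule D K) :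
    bigTri D K o (Submodule.span D[X] (Set.range (RatFunc.X⁻¹ ^ ·))) = ⊤ := by
  rw [bigTri, bigTriT, if_neg]
  rintro ⟨z, hz, hzA⟩
  refine hz (eq_zero_of_forall_mul_inv_X_pow_eq_polynomial fun n => ?_)
  obtain ⟨p, -, hp⟩ := hzA _ (Submodule.subset_span ⟨n, rfl⟩)
  exact ⟨p, hp⟩

lemma exists_mul_polyExt_ne_bigTri (S : Submodule D K) :
    ∃ A : Submodule D[X] (RatFunc K), A ≠ ⊥ ∧ A * polyExt D K S ≠ bigTri D K (· * S) A := by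
  set A := Submodule.span D[X] (Set.range (RatFunc.X⁻¹ ^ · : ℕ → RatFunc K))
  refine ⟨A, (Submodule.ne_bot_iff A).mpr ⟨1, Submodule.subset_span ⟨0, pow_zero _⟩, one_ne_zero⟩,
    fun h => ?_⟩
  have hA : A ≤ laurentPolynomials D K :=
    Submodule.span_le.mpr <| Set.range_subset_iff.mpr inv_X_pow_mem_laurentPolynomials
  have hle : A * polyExt D K S ≤ laurentPolynomials D K :=
    (mul_le_mul_left hA _).trans (laurentPolynomials_mul_polyExt_le S)
  rw [h, bigTri_span_inv_X_pow, top_le_iff] at hle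
  exact inv_one_add_X_notMem_laurentPolynomials (hle ▸ Submodule.mem_top)

end PolyExt

theorem curly_overring_extension_general (D K : Type*) [CommRing D] [Field K] [Algebra D K] (T : Subalgebra D K) :
    (∀ A : Submodule (Polynomial D) (RatFunc K), A ≠ ⊥ →
      curlyFun D K (fun E => E * Subalgebra.toSubmodule T) A =
        A * polyExt D K (Subalgebra.toSubmodule T)) ∧
    (∀ A : Submodule (Polynomial D) (RatFunc K), A ≠ ⊥ →
      A * polyExt D K (Subalgebra.toSubmodule T) ≤
        bigTri D K (fun E => E * Subalgebra.toSubmodule T) A) ∧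
    ¬ ∀ A : Submodule (Polynomial D) (RatFunc K), A ≠ ⊥ →
      A * polyExt D K (Subalgebra.toSubmodule T) =
        bigTri D K (fun E => E * Subalgebra.toSubmodule T) A := by
  refine ⟨fun A hA => curlyFun_mul_eq_mul_polyExt T hA,
    fun A _ => mul_polyExt_le_bigTriT _ ⊤ A, fun h => ?_⟩
  obtain ⟨A, hA, hne⟩ := exists_mul_polyExt_ne_bigTri (Subalgebra.toSubmodule T)
  exact hne (h A hA)

theorem curly_overring_extension (D K : Type*) [CommRing D] [IsDomain D] [Field K] [Algebra D K] [IsFractionRing D K] (T : Subalgebra D K) :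
    (∀ A : Submodule (Polynomial D) (RatFunc K), A ≠ ⊥ →
      curlyFun D K (fun E => E * Subalgebra.toSubmodule T) A =
        A * polyExt D K (Subalgebra.toSubmodule T)) ∧
    (∀ A : Submodule (Polynomial D) (RatFunc K), A ≠ ⊥ →
      A * polyExt D K (Subalgebra.toSubmodule T) ≤
        bigTri D K (fun E => E * Subalgebra.toSubmodule T) A) ∧
    ¬ ∀ A : Submodule (Polynomial D) (RatFunc K), A ≠ ⊥ →
      A * polyExt D K (Subalgebra.toSubmodule T) =
        bigTri D K (fun E => E * Subalgebra.toSubmodule T) A :=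
  curly_overring_extension_general D K T
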